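/- Let κ be an infinite cardinal. Every connected κ-regular graph contains a κ-regular spanning tree. -/

import Mathlib

open Cardinal

universe u

/-- `G` is `κ`-regular: every vertex has degree (neighbourhood cardinality) exactly `κ`. -/
def SimpleGraph.CardRegular {V : Type u} (G : SimpleGraph V) (κ : Cardinal.{u}) : Prop :=
  ∀ v : V, #(G.neighborSet v) = κ

/-- `G` has no isolated vertices. -/
def SimpleGraph.NoIsolatedVerts {V : Type u} (G : SimpleGraph V) : Prop :=
  ∀ v : V, ∃ w : V, G.Adj v w

/-- A factorization of `G`: a family of spanning subgraphs, pairwise edge-disjoint,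
whose edge sets cover `E(G)`. -/
def SimpleGraph.IsFactorization {V : Type u} {ι : Type u} (G : SimpleGraph V)
    (F : ι → SimpleGraph V) : Prop :=
  (∀ i, F i ≤ G) ∧ (Pairwise fun i j => Disjoint (F i).edgeSet (F j).edgeSet) ∧
    (⋃ i, (F i).edgeSet) = G.edgeSet

/-- In the forest `F` rooted at `v₀`, `u` is a child of `w`. -/
def SimpleGraph.IsChild {V : Type u} (F : SimpleGraph V) (v₀ u w : V) : Prop :=
  F.Adj w u ∧ F.Reachable v₀ u ∧ F.dist v₀ u = F.dist v₀ w + 1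

/-- The graph with edges `v_j v_i` for `v_i ∈ C j`, `j < i`. -/
def childGraph {V I : Type u} [LT I] (v : I ≃ V) (C : I → Set V) : SimpleGraph V :=
  SimpleGraph.fromEdgeSet {e | ∃ i j : I, j < i ∧ (v i : V) ∈ C j ∧ e = s(v j, v i)}

/-- Disjoint union of `ι`-many copies of `T`. -/
def copiesGraph (ι : Type u) {W : Type u} (T : SimpleGraph W) : SimpleGraph (ι × W) where
  Adj p q := p.1 = q.1 ∧ T.Adj p.2 q.2
  symm := by constructor; rintro p q ⟨h1, h2⟩; exact ⟨h1.symm, h2.symm⟩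
  loopless := by constructor; rintro p ⟨-, h⟩; exact T.irrefl h

/-!
Well-order `V` in order type `κ`, so that every vertex has fewer than `κ` predecessors, in such a
way that every vertex but the first has an earlier neighbour: a transfinite breadth-first
enumeration, made exhaustive by always taking the least candidate in a fixed enumeration of `V`.
Every vertex then has `κ` later neighbours, so, handling the pairs `V × V` one at a time in order
type `κ`, one picks pairwise distinct later neighbours `s (v, x)` of `v`. Making `v` the parent of
each `s (v, x)`, and an earlier neighbour the parent of every other vertex but the first, gives a
parent function decreasing along the order; its parent edges form a spanning tree of `G` in which
every vertex has `κ` children.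
-/

open Ordinal Set Function

theorem WellFoundedLT.exists_forall_mem {α X : Type*} [Preorder α] [WellFoundedLT α]
    (C : (i : α) → (Iio i → X) → Set X) (hC : ∀ i g, (C i g).Nonempty) :
    ∃ f : α → X, ∀ i, f i ∈ C i fun j => f j := by
  refine ⟨wellFounded_lt.fix fun i g => (hC i fun j => g j j.2).some, fun i => ?_⟩
  rw [wellFounded_lt.fix_eq]
  exact Nonempty.some_mem _

theorem Cardinal.exists_injective_forall_mem_of_le_mk {ι X : Type u} (A : ι → Set X)
    (hA : ∀ i, #ι ≤ #(A i)) : ∃ s : ι → X, Injective s ∧ ∀ i, s i ∈ A i := by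
  obtain ⟨_, _, hι⟩ := exists_ord_eq_type_lt ι
  obtain ⟨s, hs⟩ := WellFoundedLT.exists_forall_mem (fun i (g : Iio i → X) => A i \ range g)
    fun i _ => sdiff_nonempty_of_mk_lt_mk ((mk_range_le.trans_lt (mk_Iio_lt i hι)).trans_le (hA i))
  exact ⟨s, .of_lt_imp_ne fun j i hji h => (hs i).2 ⟨⟨j, hji⟩, h⟩, fun i => (hs i).1⟩

theorem Cardinal.le_mk_of_subset_union_Iic {α : Type u} [LinearOrder α] [WellFoundedLT α]
    (hα : ord #α = typeLT α) (hinf : ℵ₀ ≤ #α) {s t : Set α} {i : α} (hts : t ⊆ s ∪ Iic i)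
    (ht : #α ≤ #t) : #α ≤ #s := by
  by_contra! hs
  exact (ht.trans ((mk_le_mk_of_subset hts).trans (mk_union_le s (Iic i)))).not_gt
    (add_lt_of_lt hinf hs (mk_Iic_lt i hα hinf))

namespace SimpleGraph

variable {V : Type u}

def parentGraph (p : V → V) : SimpleGraph V := fromRel fun v w => w = p v

section parentGraph

variable {p : V → V}

theorem parentGraph_adj {v w : V} :
    (parentGraph p).Adj v w ↔ v ≠ w ∧ (w = p v ∨ v = p w) :=
  fromRel_adj _ v w

theorem parentGraph_le {G : SimpleGraph V} (h : ∀ v, p v ≠ v → G.Adj v (p v)) :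
    parentGraph p ≤ G := by
  rintro v w ⟨hvw, rfl | rfl⟩
  · exact h v (Ne.symm hvw)
  · exact (h w hvw).symm

theorem parentGraph_adj_of_eq {v w : V} (hvw : v ≠ w) (h : p w = v) : (parentGraph p).Adj v w :=
  parentGraph_adj.2 ⟨hvw, .inr h.symm⟩

variable [LinearOrder V] (hlt : ∀ v, p v ≠ v → p v < v)
include hlt

theorem eq_of_parentGraph_adj_of_le {v w : V} (h : (parentGraph p).Adj v w) (hwv : w ≤ v) :
    w = p v := by
  obtain ⟨hvw, rfl | rfl⟩ := parentGraph_adj.1 h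
  · rfl
  · exact absurd (hlt w hvw) hwv.not_gt

theorem isAcyclic_parentGraph : (parentGraph p).IsAcyclic := by
  -- The largest vertex of a cycle has two distinct neighbours on it, both smaller: both its parent.
  intro x c hc
  obtain ⟨m, hm, hmax⟩ := c.support.toFinset.exists_max_image id ⟨x, by simp⟩
  rw [List.mem_toFinset] at hm
  have hc' := hc.rotate hm
  have hparent : ∀ w ∈ (c.rotate m hm).support, (parentGraph p).Adj m w → w = p m :=
    fun w hw hadj => eq_of_parentGraph_adj_of_le hlt hadj (hmax w (by simpa using hw))
  refine hc'.snd_ne_penultimate ((hparent _ (Walk.getVert_mem_support ..) ?_).trans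
    (hparent _ (Walk.getVert_mem_support ..) ?_).symm)
  · exact Walk.adj_snd hc'.not_nil
  · exact (Walk.adj_penultimate hc'.not_nil).symm

theorem isTree_parentGraph [WellFoundedLT V] [Nonempty V] (hmin : ∀ v, p v = v → IsMin v) :
    (parentGraph p).IsTree := by
  refine ⟨?_, isAcyclic_parentGraph hlt⟩
  obtain ⟨root, -, hroot⟩ := wellFounded_lt.has_min (univ : Set V) univ_nonempty
  refine (connected_iff_exists_forall_reachable _).2 ⟨root, fun v => ?_⟩
  induction v using WellFoundedLT.induction with
  | _ v ih =>
    by_cases hv : p v = v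
    · obtain rfl : root = v := (hmin v hv).eq_of_le (not_lt.1 (hroot v trivial))
      rfl
    · exact (ih _ (hlt v hv)).trans (parentGraph_adj_of_eq hv rfl).reachable

end parentGraph

variable {G : SimpleGraph V}

theorem Connected.mk_le_of_forall_mk_neighborSet_le {κ : Cardinal.{u}} (hconn : G.Connected)
    (hκ : ℵ₀ ≤ κ) (hdeg : ∀ v, #(G.neighborSet v) ≤ κ) : #V ≤ κ := by
  obtain ⟨v₀⟩ := hconn.nonempty
  let ball : ℕ → Set V := fun n => {v | ∃ w : G.Walk v v₀, w.length ≤ n}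
  have hball : ∀ n, #(ball n) ≤ κ := by
    intro n
    induction n with
    | zero =>
      refine (mk_le_mk_of_subset (t := {v₀}) ?_).trans (by simpa using one_le_aleph0.trans hκ)
      rintro v ⟨w, hw⟩
      exact (Walk.eq_of_length_eq_zero (Nat.le_zero.1 hw) :)
    | succ n ih =>
      have hsub : ball (n + 1) ⊆ insert v₀ (⋃ u ∈ ball n, G.neighborSet u) := by
        rintro v ⟨_ | ⟨hvu, w⟩, hw⟩
        · exact mem_insert _ _
        · exact mem_insert_of_mem _ (mem_biUnion ⟨w, by simp_all⟩ hvu.symm)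
      calc #(ball (n + 1)) ≤ κ * κ + 1 :=
            (mk_le_mk_of_subset hsub).trans <| mk_insert_le.trans <| add_le_add_left
              ((mk_biUnion_le _ _).trans (mul_le_mul' ih (ciSup_le' fun u => hdeg u))) _
        _ = κ := by rw [mul_eq_self hκ, add_one_eq hκ]
  refine mk_le_of_countable_eventually_mem (l := Filter.atTop) (fun v => ?_) hball
  obtain ⟨w⟩ := hconn.preconnected v v₀
  exact Filter.eventually_atTop.2 ⟨w.length, fun n hn => ⟨w, hn⟩⟩

theorem Connected.mk_eq_of_cardRegular {κ : Cardinal.{u}} (hconn : G.Connected) (hκ : ℵ₀ ≤ κ)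
    (hreg : G.CardRegular κ) : #V = κ := by
  obtain ⟨v⟩ := hconn.nonempty
  exact le_antisymm (hconn.mk_le_of_forall_mk_neighborSet_le hκ fun v => (hreg v).le)
    (hreg v ▸ mk_set_le _)

theorem Connected.exists_equiv_forall_exists_adj_lt {α : Type u} [LinearOrder α]
    [WellFoundedLT α] (hconn : G.Connected) (hα : ord #α = typeLT α) (hinf : ℵ₀ ≤ #α)
    (hαV : #α = #V) : ∃ f : α ≃ V, ∀ i, ¬IsMin i → ∃ j < i, G.Adj (f j) (f i) := by
  obtain ⟨e⟩ : Nonempty (V ≃ α) := Cardinal.eq.1 hαV.symm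
  let D : (i : α) → (Iio i → V) → Set V := fun i g =>
    {x | x ∉ range g ∧ (¬IsMin i → ∃ j, G.Adj (g j) x)}
  have hD : ∀ i g, (D i g).Nonempty := by
    intro i g
    obtain ⟨b, -, hb⟩ := sdiff_nonempty_of_mk_lt_mk (S := range g) (T := univ)
      (by rw [mk_univ, ← hαV]; exact mk_range_le.trans_lt (mk_Iio_lt i hα))
    by_cases hi : IsMin i
    · exact ⟨b, hb, fun h => (h hi).elim⟩
    · obtain ⟨j, hj⟩ := not_isMin_iff.1 hi
      obtain ⟨w⟩ := hconn.preconnected (g ⟨j, hj⟩) b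
      obtain ⟨d, -, ⟨k, hk⟩, hd⟩ := w.exists_boundary_dart _ (mem_range_self _) hb
      exact ⟨d.snd, hd, fun _ => ⟨k, show G.Adj (g k) d.snd from hk ▸ d.adj⟩⟩
  -- Choosing the `e`-least candidate at each step is what makes the enumeration exhaust `V`.
  obtain ⟨f, hf⟩ := WellFoundedLT.exists_forall_mem
    (fun i g => {x ∈ D i g | ∀ y ∈ D i g, e x ≤ e y}) fun i g => by
      obtain ⟨x, hx, hmin⟩ := (InvImage.wf e wellFounded_lt).has_min _ (hD i g)
      exact ⟨x, hx, fun y hy => not_lt.1 (hmin y hy)⟩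
  have hinj : Injective f := .of_lt_imp_ne fun j i hji h => (hf i).1.1 ⟨⟨j, hji⟩, h⟩
  have hsurj : Surjective f := by
    intro v
    by_contra! hv
    obtain ⟨w⟩ := hconn.preconnected (f (e v)) v
    obtain ⟨d, -, ⟨j, hj⟩, hd⟩ :=
      w.exists_boundary_dart (range f) (mem_range_self _) fun ⟨i, hi⟩ => hv i hi
    have hle : ∀ i, j < i → e (f i) ≤ e d.snd := fun i hji =>
      (hf i).2 _ ⟨fun ⟨k, hk⟩ => hd ⟨k, hk⟩,
        fun _ => ⟨⟨j, hji⟩, show G.Adj (f j) d.snd from hj ▸ d.adj⟩⟩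
    have hIoi : #α ≤ #(Ioi j) :=
      le_mk_of_subset_union_Iic hα hinf (t := univ) (fun i _ => le_or_gt i j |>.symm)
        (by rw [mk_univ])
    refine (hIoi.trans ?_).not_gt (mk_Iic_lt (e d.snd) hα hinf)
    exact mk_le_of_injective (f := fun i : Ioi j => (⟨e (f i), hle i i.2⟩ : Iic (e d.snd)))
      fun a b h => Subtype.ext (hinj (e.injective (congrArg Subtype.val h)))
  exact ⟨.ofBijective f ⟨hinj, hsurj⟩, fun i hi => by
    obtain ⟨⟨j, hj⟩, hadj⟩ := (hf i).1.2 hi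
    exact ⟨j, hj, hadj⟩⟩

theorem Connected.exists_wellOrder_forall_exists_adj_lt (hconn : G.Connected) (hinf : ℵ₀ ≤ #V) :
    ∃ (_ : LinearOrder V) (_ : WellFoundedLT V),
      ord #V = typeLT V ∧ ∀ v, ¬IsMin v → ∃ u < v, G.Adj u v := by
  classical
  obtain ⟨f, hf⟩ := hconn.exists_equiv_forall_exists_adj_lt (α := (#V).ord.ToType)
    (by simp) (by simpa) (by simp)
  let order : LinearOrder V := f.symm.linearOrder
  let φ : V ≃o (#V).ord.ToType := ⟨f.symm, Iff.rfl⟩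
  have wf : WellFoundedLT V := φ.toOrderEmbedding.wellFoundedLT
  refine ⟨order, wf, by rw [φ.ordinalType_congr]; simp, fun v hv => ?_⟩
  obtain ⟨j, hj, hadj⟩ := hf (φ v) (φ.isMin_apply.not.2 hv)
  exact ⟨f j, φ.lt_iff_lt.1 (by simpa [φ] using hj), by simpa [φ] using hadj⟩

theorem le_mk_setOf_adj_lt [LinearOrder V] [WellFoundedLT V] (hord : ord #V = typeLT V)
    (hinf : ℵ₀ ≤ #V) {v : V} (hdeg : #V ≤ #(G.neighborSet v)) : #V ≤ #{w | G.Adj v w ∧ v < w} :=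
  le_mk_of_subset_union_Iic hord hinf (i := v)
    (fun w hw => (lt_or_ge v w).imp (⟨hw, ·⟩) id) hdeg

theorem exists_parent_forall_le_mk_children [LinearOrder V] (hinf : ℵ₀ ≤ #V)
    (hearlier : ∀ v, ¬IsMin v → ∃ u < v, G.Adj u v)
    (hlater : ∀ v, #V ≤ #{w | G.Adj v w ∧ v < w}) :
    ∃ p : V → V, (∀ v, p v ≠ v → p v < v ∧ G.Adj v (p v)) ∧ (∀ v, p v = v → IsMin v) ∧
      ∀ v, #V ≤ #{w | v < w ∧ p w = v} := by
  classical
  obtain ⟨s, hs, hsmem⟩ := exists_injective_forall_mem_of_le_mk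
    (fun x : V × V => {w | G.Adj x.1 w ∧ x.1 < w}) fun x => by
      simpa [mul_eq_self hinf] using hlater x.1
  choose q hq using hearlier
  let p : V → V := fun w =>
    if h : ∃ x, s x = w then h.choose.1 else if hw : IsMin w then w else q w hw
  have hps : ∀ x, p (s x) = x.1 := fun x => by
    have h : ∃ y, s y = s x := ⟨x, rfl⟩
    simp only [p, dif_pos h, hs h.choose_spec]
  have hp : ∀ w, (IsMin w ∧ p w = w) ∨ (p w < w ∧ G.Adj w (p w)) := by
    intro w
    by_cases h : ∃ x, s x = w
    · obtain ⟨x, rfl⟩ := h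
      rw [hps]
      exact .inr ⟨(hsmem x).2, (hsmem x).1.symm⟩
    · by_cases hw : IsMin w
      · exact .inl ⟨hw, by simp only [p, dif_neg h, dif_pos hw]⟩
      · simp only [p, dif_neg h, dif_neg hw]
        exact .inr ⟨(hq w hw).1, (hq w hw).2.symm⟩
  refine ⟨p, fun w hw => (hp w).resolve_left fun h => hw h.2,
    fun w hw => ((hp w).resolve_right fun h => h.1.ne hw).1, fun v => ?_⟩
  exact mk_le_of_injective (f := fun x => (⟨s (v, x), (hsmem (v, x)).2, hps (v, x)⟩ :
    {w | v < w ∧ p w = v})) fun x y h => congrArg Prod.snd (hs (congrArg Subtype.val h))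

end SimpleGraph

/-- Andersen–Thomassen 1980: every connected `κ`-regular graph (κ infinite) contains a
`κ`-regular spanning tree. -/
theorem stmt_1 (κ : Cardinal.{u}) (hκ : ℵ₀ ≤ κ) {V : Type u} (G : SimpleGraph V)
    (hconn : G.Connected) (hreg : G.CardRegular κ) :
    ∃ F : SimpleGraph V, F ≤ G ∧ F.IsTree ∧ F.CardRegular κ := by
  have hV : #V = κ := hconn.mk_eq_of_cardRegular hκ hreg
  have hinf : ℵ₀ ≤ #V := hV ▸ hκ
  have : Nonempty V := hconn.nonempty
  obtain ⟨_, _, hord, hearlier⟩ := hconn.exists_wellOrder_forall_exists_adj_lt hinf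
  obtain ⟨p, hp, hmin, hchildren⟩ := SimpleGraph.exists_parent_forall_le_mk_children hinf
    hearlier fun v => SimpleGraph.le_mk_setOf_adj_lt hord hinf (hV ▸ (hreg v).ge)
  refine ⟨SimpleGraph.parentGraph p, SimpleGraph.parentGraph_le fun v hv => (hp v hv).2,
    SimpleGraph.isTree_parentGraph (fun v hv => (hp v hv).1) hmin, fun v => ?_⟩
  rw [← hV]
  exact le_antisymm (mk_set_le _) ((hchildren v).trans
    (mk_le_mk_of_subset fun w hw => SimpleGraph.parentGraph_adj_of_eq hw.1.ne hw.2))
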